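/- arXiv:1203.1042 — 2 statements merged into one kernel-verified Lean document; each statement's English description precedes it below -/
import Mathlib

section
/- Sauer–Shelah lemma: if a family 𝓡 of subsets of a set X has VC dimension at most d, then for every finite A ⊆ X with |A| = n, the number of distinct sets A ∩ R with R ∈ 𝓡 is at most g(n,d) = Σ_{i=0}^{d} C(n, i). -/
/-!
By Pajor's form of the lemma, a finite family has at most as many members as there are sets it
shatters. Apply this to the traces of `𝓡` on `A`, viewed as a family of subsets of `A`: every set
it shatters is a subset of `A` shattered by `𝓡`, hence has at most `d` elements, and there are
`∑_{i ≤ d} C(n, i)` such subsets of `A`.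
-/

open Finset

namespace Finset

variable {α : Type*} [DecidableEq α]

theorem card_le_sum_choose_vcDim {𝒜 : Finset (Finset α)} {A : Finset α}
    (h𝒜 : ∀ t ∈ 𝒜, t ⊆ A) : #𝒜 ≤ ∑ k ∈ range (𝒜.vcDim + 1), (#A).choose k := by
  have hsub : 𝒜.shatterer ⊆ (range (𝒜.vcDim + 1)).biUnion (A.powersetCard ·) := by
    intro s hs
    have hs := mem_shatterer.1 hs
    obtain ⟨t, ht, hst⟩ := hs.exists_superset
    exact mem_biUnion.2 ⟨#s, mem_range_succ_iff.2 hs.card_le_vcDim,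
      mem_powersetCard.2 ⟨hst.trans (h𝒜 t ht), rfl⟩⟩
  calc #𝒜 ≤ #𝒜.shatterer := card_le_card_shatterer 𝒜
    _ ≤ _ := (card_le_card hsub).trans card_biUnion_le
    _ = _ := by simp only [card_powersetCard]

end Finset

section Traces

variable {X : Type*}

open Classical in
noncomputable def traceFamily (𝓡 : Set (Set X)) (A : Finset X) : Finset (Finset X) :=
  {t ∈ A.powerset | ∃ r ∈ 𝓡, (t : Set X) = (A : Set X) ∩ r}

theorem mem_traceFamily {𝓡 : Set (Set X)} {A t : Finset X} :
    t ∈ traceFamily 𝓡 A ↔ t ⊆ A ∧ ∃ r ∈ 𝓡, (t : Set X) = (A : Set X) ∩ r := by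
  simp [traceFamily]

theorem setOf_trace_eq_image_traceFamily (𝓡 : Set (Set X)) (A : Finset X) :
    {S : Set X | ∃ r ∈ 𝓡, S = (A : Set X) ∩ r} = (↑) '' (traceFamily 𝓡 A : Set (Finset X)) := by
  ext S
  simp only [Set.mem_ofPred_eq, Set.mem_image, mem_coe, mem_traceFamily]
  constructor
  · rintro ⟨r, hr, rfl⟩
    lift (A : Set X) ∩ r to Finset X using A.finite_toSet.inter_of_left r with t ht
    exact ⟨t, ⟨coe_subset.1 (ht ▸ Set.inter_subset_left), r, hr, ht⟩, rfl⟩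
  · rintro ⟨t, ⟨-, r, hr, ht⟩, rfl⟩
    exact ⟨r, hr, ht⟩

theorem ncard_setOf_trace (𝓡 : Set (Set X)) (A : Finset X) :
    {S : Set X | ∃ r ∈ 𝓡, S = (A : Set X) ∩ r}.ncard = #(traceFamily 𝓡 A) := by
  rw [setOf_trace_eq_image_traceFamily, Set.ncard_image_of_injective _ coe_injective,
    Set.ncard_coe_finset]

theorem Finset.Shatters.of_traceFamily [DecidableEq X] {𝓡 : Set (Set X)} {A s : Finset X}
    (hs : (traceFamily 𝓡 A).Shatters s) : ∀ Y ⊆ (s : Set X), ∃ r ∈ 𝓡, (s : Set X) ∩ r = Y := by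
  intro Y hY
  lift Y to Finset X using s.finite_toSet.subset hY
  obtain ⟨u, hu, hsu⟩ := hs (coe_subset.1 hY)
  obtain ⟨-, r, hr, hur⟩ := mem_traceFamily.1 hu
  obtain ⟨v, hv, hsv⟩ := hs.exists_superset
  have hsA : (s : Set X) ⊆ A := coe_subset.2 (hsv.trans (mem_traceFamily.1 hv).1)
  refine ⟨r, hr, ?_⟩
  rw [← hsu, coe_inter, hur, ← Set.inter_assoc, Set.inter_eq_left.2 hsA]

end Traces

/-- Sauer–Shelah lemma: if a family `𝓡` of subsets of `X` has VC dimension at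
most `d` (no set of more than `d` points is shattered), then for every finite
`A ⊆ X`, the number of distinct traces `A ∩ R`, `R ∈ 𝓡`, is at most
`g(|A|, d) = Σ_{i=0}^{d} C(|A|, i)`. -/
theorem stmt_8 {X : Type*} (𝓡 : Set (Set X)) (d : ℕ)
    (hVC : ∀ A : Finset X,
      (∀ Y ⊆ (A : Set X), ∃ r ∈ 𝓡, (A : Set X) ∩ r = Y) → A.card ≤ d)
    (A : Finset X) (n : ℕ) (hn : A.card = n) :
    Set.ncard {S : Set X | ∃ r ∈ 𝓡, S = (A : Set X) ∩ r} ≤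
      ∑ i ∈ Finset.range (d + 1), n.choose i := by
  classical
  have hdim : (traceFamily 𝓡 A).vcDim ≤ d :=
    Finset.sup_le fun s hs ↦ hVC s (mem_shatterer.1 hs).of_traceFamily
  rw [ncard_setOf_trace, ← hn]
  calc _ ≤ _ := card_le_sum_choose_vcDim fun t ht ↦ (mem_traceFamily.1 ht).1
    _ ≤ _ := sum_le_sum_of_subset (range_subset_range.2 (by omega))
end

section
/- Tight lower bound: there is a constant c > 0 such that for all a > 0, 0 < ε ≤ R < a/4, any (R, ε)-colander S for [0, a]² satisfies |S| ≥ c · a²/(R ε). -/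
/-!
Sample the horizontal line at height `y` at the points `(2εk, y)`, `0 ≤ k ≤ a/(2ε)`. Consecutive
samples are `2ε > ε` apart, so the colander property puts a point of `S` in the symmetric
difference of their `R`-balls; that point lies in the strip `|s₁ - y| ≤ R`. Since the samples
whose ball contains a fixed `s` form an interval of indices, each `s` accounts for at most two
consecutive pairs, so the strip holds at least `a/(8ε)` points of `S`. The strips around the
heights `3Rj`, `0 ≤ j ≤ a/(3R)`, are disjoint, which gives `|S| ≥ a²/(24 R ε)`.
-/

/-- `S` is an `(R, ε)`-colander for `D`. -/
def IsColander (S : Set (EuclideanSpace ℝ (Fin 2))) (R ε : ℝ)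
    (D : Set (EuclideanSpace ℝ (Fin 2))) : Prop :=
  ∀ q ∈ D, ∀ q' ∈ D,
    Metric.closedBall q R ∩ S = Metric.closedBall q' R ∩ S → dist q q' ≤ ε

open Finset Metric

theorem Set.OrdConnected.not_iff_of_not_iff_succ {I : Set ℕ} (hI : I.OrdConnected) {i j : ℕ}
    (hij : i < j) (hi : ¬(i ∈ I ↔ i + 1 ∈ I)) (hj : ¬(j ∈ I ↔ j + 1 ∈ I)) :
    ¬(i ∈ I ↔ j ∈ I) := by
  intro hij'
  by_cases hiI : i ∈ I
  · exact hi ⟨fun _ => hI.out hiI (hij'.mp hiI) ⟨by omega, hij⟩, fun _ => hiI⟩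
  · have hi1 : i + 1 ∈ I := by tauto
    have hj1 : j + 1 ∈ I := by tauto
    exact hiI (hij'.mpr (hI.out hi1 hj1 ⟨hij, by omega⟩))

theorem le_two_mul_card_of_ordConnected {α : Type*} (B : ℕ → Set α)
    (hB : ∀ s, {k | s ∈ B k}.OrdConnected) (T : Finset α) {K : ℕ}
    (hK : ∀ i < K, ∃ s ∈ T, ¬(s ∈ B i ↔ s ∈ B (i + 1))) : K ≤ 2 * #T := by
  classical
  choose w hwT hw using fun i : Fin K => hK i i.2
  have hinj : Set.InjOn (fun i => (w i, decide (w i ∈ B i))) (univ : Finset (Fin K)) := by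
    intro i _ j _ hg
    simp only [Prod.mk.injEq, decide_eq_decide] at hg
    obtain ⟨hw_eq, hmem⟩ := hg
    by_contra hne
    rcases Fin.lt_or_lt_of_ne hne with h | h
    · exact (hB (w i)).not_iff_of_not_iff_succ h (hw i) (hw_eq ▸ hw j) (hw_eq ▸ hmem)
    · exact (hB (w j)).not_iff_of_not_iff_succ h (hw j) (hw_eq ▸ hw i) (hw_eq ▸ hmem.symm)
  simpa [card_product, mul_comm] using
    card_le_card_of_injOn _ (fun i _ => mem_product.mpr ⟨hwT i, mem_univ _⟩) hinj
      (t := T ×ˢ (univ : Finset Bool))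

theorem ordConnected_setOf_mem_closedBall_add_smul {E : Type*} [SeminormedAddCommGroup E]
    [NormedSpace ℝ E] (s p v : E) (R : ℝ) :
    {k : ℕ | s ∈ closedBall (p + (k : ℝ) • v) R}.OrdConnected := by
  have hconv : Convex ℝ ((fun t : ℝ => p + t • v) ⁻¹' closedBall s R) :=
    ((convex_closedBall s R).translate_preimage_right p).is_linear_preimage
      (IsLinearMap.isLinearMap_smul' v)
  simp only [mem_closedBall_comm (x := s)]
  exact hconv.ordConnected.preimage_mono Nat.mono_cast

theorem IsColander.le_two_mul_card {S : Finset (EuclideanSpace ℝ (Fin 2))} {R ε : ℝ}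
    {D : Set (EuclideanSpace ℝ (Fin 2))} (hS : IsColander (S : Set _) R ε D)
    {p v : EuclideanSpace ℝ (Fin 2)} (hv : ε < ‖v‖) {K : ℕ}
    (hD : ∀ k ≤ K, p + (k : ℝ) • v ∈ D) {T : Finset (EuclideanSpace ℝ (Fin 2))}
    (hT : ∀ s ∈ S, ∀ k : ℕ, dist s (p + (k : ℝ) • v) ≤ R → s ∈ T) : K ≤ 2 * #T := by
  refine le_two_mul_card_of_ordConnected (fun k => closedBall (p + (k : ℝ) • v) R)
    (fun s => ordConnected_setOf_mem_closedBall_add_smul s p v R) T fun i hi => ?_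
  have hdist : dist (p + (i : ℝ) • v) (p + ((i + 1 : ℕ) : ℝ) • v) = ‖v‖ := by
    rw [dist_add_left, dist_eq_norm, ← sub_smul, norm_smul]
    simp
  have hne : closedBall (p + (i : ℝ) • v) R ∩ S ≠ closedBall (p + ((i + 1 : ℕ) : ℝ) • v) R ∩ S :=
    fun h => (hS _ (hD i hi.le) _ (hD (i + 1) hi) h).not_gt (hdist ▸ hv)
  obtain ⟨s, hs⟩ : ∃ s ∈ S, ¬(s ∈ closedBall (p + (i : ℝ) • v) R ↔
      s ∈ closedBall (p + ((i + 1 : ℕ) : ℝ) • v) R) := by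
    by_contra! h
    exact hne (Set.ext fun s =>
      ⟨fun ⟨hb, hs⟩ => ⟨(h s hs).1 hb, hs⟩, fun ⟨hb, hs⟩ => ⟨(h s hs).2 hb, hs⟩⟩)
  refine ⟨s, ?_, hs.2⟩
  by_cases hsi : s ∈ closedBall (p + (i : ℝ) • v) R
  · exact hT s hs.1 i hsi
  · exact hT s hs.1 (i + 1) (by tauto)

theorem IsColander.floor_div_le_two_mul_card_strip {S : Finset (EuclideanSpace ℝ (Fin 2))}
    {a R ε y : ℝ}
    (hS : IsColander (S : Set (EuclideanSpace ℝ (Fin 2))) R ε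
      {p : EuclideanSpace ℝ (Fin 2) | p 0 ∈ Set.Icc (0 : ℝ) a ∧ p 1 ∈ Set.Icc (0 : ℝ) a})
    (hε : 0 < ε) (hy : y ∈ Set.Icc 0 a) :
    ⌊a / (2 * ε)⌋₊ ≤ 2 * #{s ∈ S | |s 1 - y| ≤ R} := by
  have hcoord (k : ℕ) (i : Fin 2) :
      (!₂[0, y] + (k : ℝ) • !₂[2 * ε, 0]) i = ![k * (2 * ε), y] i := by
    fin_cases i <;> simp
  refine hS.le_two_mul_card (p := !₂[0, y]) (v := !₂[2 * ε, 0]) ?_ (fun k hk => ?_) ?_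
  · simp [EuclideanSpace.norm_eq, hε.le]
    linarith
  · have hka : (k : ℝ) * (2 * ε) ≤ a := (le_div_iff₀ (by positivity)).mp
      ((Nat.cast_le.mpr hk).trans (Nat.floor_le (div_nonneg (hy.1.trans hy.2) (by positivity))))
    simp only [Set.mem_ofPred_eq, hcoord, Matrix.cons_val_zero, Matrix.cons_val_one]
    exact ⟨⟨by positivity, hka⟩, hy⟩
  · intro s hs k hk
    refine mem_filter.mpr ⟨hs, ?_⟩
    calc |s 1 - y| = dist (s 1) ((!₂[0, y] + (k : ℝ) • !₂[2 * ε, 0]) 1) := by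
          rw [hcoord, Real.dist_eq]; rfl
      _ ≤ R := (PiLp.dist_apply_le _ _ 1).trans hk

theorem Finset.pairwiseDisjoint_filter_abs_sub_mul_le {α : Type*} (S : Finset α) (f : α → ℝ)
    {R d : ℝ} (hd : 2 * R < d) (I : Set ℕ) :
    I.PairwiseDisjoint fun j : ℕ => {s ∈ S | |f s - d * j| ≤ R} := by
  intro j _ j' _ hjj'
  refine disjoint_left.mpr fun s hs hs' => ?_
  have hj : 1 ≤ |(j : ℝ) - j'| := by
    exact_mod_cast Int.one_le_abs (sub_ne_zero.mpr (Int.natCast_inj.not.mpr hjj'))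
  have hclose : |d * j - d * j'| ≤ 2 * R := by
    have := abs_sub_le (d * j) (f s) (d * j')
    rw [abs_sub_comm (d * j) (f s)] at this
    linarith [(mem_filter.mp hs).2, (mem_filter.mp hs').2]
  rw [← mul_sub, abs_mul] at hclose
  nlinarith [abs_nonneg d, le_abs_self d]

theorem IsColander.mul_floor_le_two_mul_card {S : Finset (EuclideanSpace ℝ (Fin 2))}
    {a R ε : ℝ}
    (hS : IsColander (S : Set (EuclideanSpace ℝ (Fin 2))) R ε
      {p : EuclideanSpace ℝ (Fin 2) | p 0 ∈ Set.Icc (0 : ℝ) a ∧ p 1 ∈ Set.Icc (0 : ℝ) a})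
    (ha : 0 ≤ a) (hε : 0 < ε) (hR : 0 < R) :
    (⌊a / (3 * R)⌋₊ + 1) * ⌊a / (2 * ε)⌋₊ ≤ 2 * #S := by
  set M := ⌊a / (3 * R)⌋₊
  have hy (j : ℕ) (hj : j ∈ range (M + 1)) : 3 * R * j ∈ Set.Icc 0 a := by
    have hjM : (j : ℝ) ≤ a / (3 * R) :=
      (Nat.le_floor_iff (by positivity)).mp (Nat.lt_succ_iff.mp (mem_range.mp hj))
    exact ⟨by positivity, by rwa [le_div_iff₀ (by positivity), mul_comm] at hjM⟩
  calc (M + 1) * ⌊a / (2 * ε)⌋₊ = ∑ j ∈ range (M + 1), ⌊a / (2 * ε)⌋₊ := by simp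
    _ ≤ ∑ j ∈ range (M + 1), 2 * #{s ∈ S | |s 1 - 3 * R * j| ≤ R} :=
      sum_le_sum fun j hj => hS.floor_div_le_two_mul_card_strip hε (hy j hj)
    _ = 2 * #((range (M + 1)).biUnion fun j : ℕ => {s ∈ S | |s 1 - 3 * R * j| ≤ R}) := by
      rw [← mul_sum, card_biUnion (S.pairwiseDisjoint_filter_abs_sub_mul_le _ (by linarith) _)]
    _ ≤ 2 * #S := by
      gcongr
      exact biUnion_subset.mpr fun j _ => filter_subset _ _

/-- Tight lower bound: there is `c > 0` such that for all `a > 0` and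
`0 < ε ≤ R < a/4`, any finite `(R, ε)`-colander for `[0,a]²` has at least
`c · a²/(R ε)` points. -/
theorem stmt_18 :
    ∃ c > (0 : ℝ), ∀ (a R ε : ℝ) (S : Finset (EuclideanSpace ℝ (Fin 2))),
      0 < a → 0 < ε → ε ≤ R → R < a / 4 →
      IsColander (S : Set (EuclideanSpace ℝ (Fin 2))) R ε
        {p : EuclideanSpace ℝ (Fin 2) |
          p 0 ∈ Set.Icc (0 : ℝ) a ∧ p 1 ∈ Set.Icc (0 : ℝ) a} →
      c * (a ^ 2 / (R * ε)) ≤ (S.card : ℝ) := by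
  refine ⟨1 / 24, by norm_num, fun a R ε S ha hε hεR hRa hS => ?_⟩
  have hR : 0 < R := hε.trans_le hεR
  have hcount : ((⌊a / (3 * R)⌋₊ + 1) * ⌊a / (2 * ε)⌋₊ : ℝ) ≤ 2 * #S := by
    exact_mod_cast hS.mul_floor_le_two_mul_card ha.le hε hR
  have hM : a / (3 * R) ≤ ⌊a / (3 * R)⌋₊ + 1 := (Nat.lt_floor_add_one _).le
  have hK : a / (2 * ε) / 2 ≤ ⌊a / (2 * ε)⌋₊ :=
    (Nat.div_two_lt_floor (by rw [le_div_iff₀ (by positivity)]; linarith)).le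
  calc 1 / 24 * (a ^ 2 / (R * ε)) = a / (3 * R) * (a / (2 * ε) / 2) / 2 := by field_simp; ring
    _ ≤ (⌊a / (3 * R)⌋₊ + 1) * ⌊a / (2 * ε)⌋₊ / 2 := by gcongr
    _ ≤ #S := by linarith
end
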